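/- Let μ : ℝ → ℝ be a continuous nonnegative function, let s : ℝ → ℝ be a nonnegative integrable function (the time significance), let k ≥ 1 be an integer, and fix T > 0. Define the average visibility V(k)[λ] = ∫_0^T f_k(t; λ, μ) · s(t) dt. Then V(k) is concave on the set of continuous nonnegative functions: for all continuous nonnegative λ_1, λ_2 : ℝ → ℝ and all α ∈ (0,1), V(k)[α·λ_1 + (1-α)·λ_2] ≥ α · V(k)[λ_1] + (1-α) · V(k)[λ_2]. -/

import Mathlib

open MeasureTheory Real Set Filter Topology intervalIntegral

/-- The upper incomplete Gamma function `Γ(k, x) = ∫_x^∞ s^{k-1} e^{-s} ds`. -/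
noncomputable def uGamma (k : ℕ) (x : ℝ) : ℝ :=
  ∫ s in Set.Ioi x, s ^ (k - 1) * Real.exp (-s)

/-- `f_k(t; λ, μ) = (1/(k-1)!) ∫_0^t λ(τ) exp(-∫_τ^t λ) Γ(k, ∫_τ^t μ) dτ`. -/
noncomputable def fk (k : ℕ) (lam mu : ℝ → ℝ) (t : ℝ) : ℝ :=
  (1 / (Nat.factorial (k - 1) : ℝ)) *
    ∫ τ in (0:ℝ)..t,
      lam τ * Real.exp (-∫ x in τ..t, lam x) * uGamma k (∫ x in τ..t, mu x)


/-!
Integrating by parts in `τ`, using `d/dτ exp(-∫_τ^t λ) = λ(τ) exp(-∫_τ^t λ)` and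
`d/dτ Γ(k, ∫_τ^t μ) = μ(τ) (∫_τ^t μ)^{k-1} exp(-∫_τ^t μ)`, gives

  `(k-1)! f_k(t) = (k-1)! - Γ(k, ∫_0^t μ) exp(-∫_0^t λ)`
  `                 - ∫_0^t μ(τ) (∫_τ^t μ)^{k-1} exp(-∫_τ^t μ) exp(-∫_τ^t λ) dτ`.

Now `λ` enters only through the terms `exp(-∫_τ^t λ)`, with nonnegative coefficients when
`t ≥ 0`, and these are convex in `λ` because `exp` is convex and `λ ↦ ∫_τ^t λ` is linear.
Hence `f_k(t)` is concave in `λ`, and integrating against `s ≥ 0` preserves concavity.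
-/

lemma integrableOn_pow_mul_exp_neg_Ioi (n : ℕ) (a : ℝ) :
    IntegrableOn (fun s : ℝ => s ^ n * exp (-s)) (Ioi a) :=
  integrable_of_isBigO_exp_neg one_half_pos (by fun_prop) <| by
    simpa only [mul_comm (exp _), rpow_natCast] using (Gamma_integrand_isLittleO n).isBigO

lemma uGamma_zero (k : ℕ) : uGamma k 0 = (k - 1).factorial := by
  rw [uGamma, ← Gamma_nat_eq_factorial, Gamma_eq_integral (by positivity)]
  simp only [add_sub_cancel_right, rpow_natCast, mul_comm (exp _)]

lemma uGamma_eq_sub_intervalIntegral (k : ℕ) (a b : ℝ) :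
    uGamma k b = uGamma k a - ∫ s in a..b, s ^ (k - 1) * exp (-s) := by
  have split : ∀ {a b : ℝ}, a ≤ b →
      uGamma k a = (∫ s in a..b, s ^ (k - 1) * exp (-s)) + uGamma k b := by
    intro a b hab
    rw [integral_of_le hab, uGamma, uGamma, ← Ioc_union_Ioi_eq_Ioi hab,
      setIntegral_union (Ioc_disjoint_Ioi le_rfl) measurableSet_Ioi
        ((integrableOn_pow_mul_exp_neg_Ioi _ a).mono_set Ioc_subset_Ioi_self)
        (integrableOn_pow_mul_exp_neg_Ioi _ b)]
  rcases le_total a b with hab | hba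
  · rw [split hab]; ring
  · rw [split hba, integral_symm]; ring

lemma hasDerivAt_uGamma (k : ℕ) (x : ℝ) :
    HasDerivAt (uGamma k) (-(x ^ (k - 1) * exp (-x))) x := by
  have hcont : Continuous fun s : ℝ => s ^ (k - 1) * exp (-s) := by fun_prop
  exact ((hcont.integral_hasStrictDerivAt 0 x).hasDerivAt.const_sub _).congr_of_eventuallyEq
    (.of_forall fun y => uGamma_eq_sub_intervalIntegral k 0 y)

lemma continuous_uGamma (k : ℕ) : Continuous (uGamma k) :=
  continuous_iff_continuousAt.2 fun x => (hasDerivAt_uGamma k x).continuousAt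

lemma uGamma_nonneg (k : ℕ) {x : ℝ} (hx : 0 ≤ x) : 0 ≤ uGamma k x :=
  setIntegral_nonneg measurableSet_Ioi fun s hs => by
    have : 0 < s := hx.trans_lt hs
    positivity

lemma hasDerivAt_intervalIntegral_left {f : ℝ → ℝ} (hf : Continuous f) (b x : ℝ) :
    HasDerivAt (fun a => ∫ y in a..b, f y) (-f x) x :=
  integral_hasDerivAt_left (hf.intervalIntegrable _ _) (hf.stronglyMeasurableAtFilter _ _)
    hf.continuousAt

lemma continuous_intervalIntegral_uncurry {f : ℝ → ℝ} (hf : Continuous f) :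
    Continuous fun p : ℝ × ℝ => ∫ y in p.1..p.2, f y := by
  have hP := continuous_primitive (μ := volume) (fun a b => hf.intervalIntegrable a b) 0
  refine ((hP.comp continuous_snd).sub (hP.comp continuous_fst)).congr fun p => ?_
  exact integral_interval_sub_left (hf.intervalIntegrable _ _) (hf.intervalIntegrable _ _)

lemma continuous_intervalIntegral_left {f : ℝ → ℝ} (hf : Continuous f) (b : ℝ) :
    Continuous fun a => ∫ y in a..b, f y :=
  (continuous_intervalIntegral_uncurry hf).comp (continuous_id.prodMk continuous_const)

lemma continuous_fk (k : ℕ) {lam mu : ℝ → ℝ} (hlam : Continuous lam) (hmu : Continuous mu) :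
    Continuous (fk k lam mu) := by
  have hswap : Continuous fun p : ℝ × ℝ => (p.2, p.1) := continuous_swap
  have hΛ := (continuous_intervalIntegral_uncurry hlam).comp hswap
  have hM := (continuous_intervalIntegral_uncurry hmu).comp hswap
  exact continuous_const.mul <| continuous_parametric_intervalIntegral_of_continuous
    (((hlam.comp continuous_snd).mul hΛ.neg.rexp).mul ((continuous_uGamma k).comp hM))
    continuous_id

lemma integral_mul_exp_neg_mul_uGamma (k : ℕ) {lam mu : ℝ → ℝ} (hlam : Continuous lam)
    (hmu : Continuous mu) (t : ℝ) :
    ∫ τ in 0..t, lam τ * exp (-∫ x in τ..t, lam x) * uGamma k (∫ x in τ..t, mu x) =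
      (k - 1).factorial - uGamma k (∫ x in 0..t, mu x) * exp (-∫ x in 0..t, lam x) -
        ∫ τ in 0..t, mu τ * ((∫ x in τ..t, mu x) ^ (k - 1) * exp (-∫ x in τ..t, mu x)) *
          exp (-∫ x in τ..t, lam x) := by
  set Λ := fun τ => ∫ x in τ..t, lam x
  set M := fun τ => ∫ x in τ..t, mu x
  have hΛ : ∀ τ, HasDerivAt (fun τ => exp (-Λ τ)) (lam τ * exp (-Λ τ)) τ := fun τ => by
    simpa [mul_comm] using (hasDerivAt_intervalIntegral_left hlam t τ).neg.exp
  have hM : ∀ τ, HasDerivAt (fun τ => uGamma k (M τ))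
      (mu τ * (M τ ^ (k - 1) * exp (-M τ))) τ := fun τ =>
    ((hasDerivAt_uGamma k (M τ)).comp τ (hasDerivAt_intervalIntegral_left hmu t τ)).congr_deriv
      (by ring)
  have hΛc := continuous_intervalIntegral_left hlam t
  have hMc := continuous_intervalIntegral_left hmu t
  have hint₁ :
      IntervalIntegrable (fun τ => lam τ * exp (-Λ τ) * uGamma k (M τ)) volume 0 t :=
    ((hlam.mul hΛc.neg.rexp).mul ((continuous_uGamma k).comp hMc)).intervalIntegrable _ _
  have hint₂ : IntervalIntegrable
      (fun τ => mu τ * (M τ ^ (k - 1) * exp (-M τ)) * exp (-Λ τ)) volume 0 t :=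
    ((hmu.mul ((hMc.pow _).mul hMc.neg.rexp)).mul hΛc.neg.rexp).intervalIntegrable _ _
  have hFTC := integral_eq_sub_of_hasDerivAt (fun τ _ => (hΛ τ).mul (hM τ))
    ((hint₁.add hint₂).congr fun τ _ => by ring)
  rw [integral_congr (g := fun τ => lam τ * exp (-Λ τ) * uGamma k (M τ) +
      mu τ * (M τ ^ (k - 1) * exp (-M τ)) * exp (-Λ τ)) (fun τ _ => by ring),
    integral_add hint₁ hint₂] at hFTC
  have hΛt : Λ t = 0 := integral_same
  have hMt : M t = 0 := integral_same
  simp only [Pi.mul_apply, hΛt, hMt, neg_zero, exp_zero, one_mul, uGamma_zero] at hFTC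
  linarith

lemma convex_setOf_continuous : Convex ℝ {f : ℝ → ℝ | Continuous f} :=
  fun _ hf _ hg a b _ _ _ => (hf.const_smul a).add (hg.const_smul b)

section IntervalIntegral

variable {E : Type*} [AddCommMonoid E] [Module ℝ E] {S : Set E} {F : E → ℝ → ℝ}
  {a b : ℝ}

theorem convexOn_intervalIntegral (hab : a ≤ b) (hS : Convex ℝ S)
    (hint : ∀ x ∈ S, IntervalIntegrable (F x) volume a b)
    (hF : ∀ t ∈ Icc a b, ConvexOn ℝ S fun x => F x t) :
    ConvexOn ℝ S fun x => ∫ t in a..b, F x t := by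
  refine ⟨hS, fun x hx y hy p q hp hq hpq => ?_⟩
  have hpx := (hint x hx).const_mul p
  have hqy := (hint y hy).const_mul q
  simp only [smul_eq_mul]
  rw [← intervalIntegral.integral_const_mul, ← intervalIntegral.integral_const_mul,
    ← intervalIntegral.integral_add hpx hqy]
  exact integral_mono_on hab (hint _ (hS hx hy hp hq hpq)) (hpx.add hqy)
    fun t ht => (hF t ht).2 hx hy hp hq hpq

theorem concaveOn_intervalIntegral (hab : a ≤ b) (hS : Convex ℝ S)
    (hint : ∀ x ∈ S, IntervalIntegrable (F x) volume a b)
    (hF : ∀ t ∈ Icc a b, ConcaveOn ℝ S fun x => F x t) :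
    ConcaveOn ℝ S fun x => ∫ t in a..b, F x t := by
  rw [← neg_convexOn_iff]
  refine (convexOn_intervalIntegral (F := fun x t => -F x t) hab hS (fun x hx => (hint x hx).neg)
    fun t ht => (hF t ht).neg).congr fun x _ => ?_
  exact intervalIntegral.integral_neg

end IntervalIntegral

lemma convexOn_exp_neg_intervalIntegral (a b : ℝ) :
    ConvexOn ℝ {lam : ℝ → ℝ | Continuous lam} fun lam => exp (-∫ x in a..b, lam x) := by
  refine ⟨convex_setOf_continuous, fun l₁ h₁ l₂ h₂ p q hp hq hpq => ?_⟩
  have hlin : ∫ x in a..b, (p • l₁ + q • l₂) x =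
      p * (∫ x in a..b, l₁ x) + q * ∫ x in a..b, l₂ x := by
    simp only [Pi.add_apply, Pi.smul_apply, smul_eq_mul]
    rw [intervalIntegral.integral_add ((h₁.intervalIntegrable a b).const_mul p)
      ((h₂.intervalIntegrable a b).const_mul q), intervalIntegral.integral_const_mul,
      intervalIntegral.integral_const_mul]
  simp only [smul_eq_mul]
  rw [hlin, neg_add, ← mul_neg, ← mul_neg]
  exact convexOn_exp.2 (mem_univ _) (mem_univ _) hp hq hpq

lemma convexOn_intervalIntegral_mul_exp_neg {w : ℝ → ℝ} (hw : Continuous w) {t : ℝ}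
    (ht : 0 ≤ t) (hw₀ : ∀ τ ∈ Icc 0 t, 0 ≤ w τ) :
    ConvexOn ℝ {lam : ℝ → ℝ | Continuous lam}
      fun lam => ∫ τ in 0..t, w τ * exp (-∫ x in τ..t, lam x) :=
  convexOn_intervalIntegral ht convex_setOf_continuous
    (fun _ hlam =>
      (hw.mul (continuous_intervalIntegral_left hlam t).neg.rexp).intervalIntegrable _ _)
    fun τ hτ => (convexOn_exp_neg_intervalIntegral τ t).smul (hw₀ τ hτ)

theorem concaveOn_fk (k : ℕ) {mu : ℝ → ℝ} (hmu_cont : Continuous mu)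
    (hmu : ∀ x, 0 ≤ mu x) {t : ℝ} (ht : 0 ≤ t) :
    ConcaveOn ℝ {lam : ℝ → ℝ | Continuous lam} fun lam => fk k lam mu t := by
  set M := fun τ => ∫ x in τ..t, mu x
  have hM : ∀ τ ≤ t, 0 ≤ M τ := fun τ hτ =>
    intervalIntegral.integral_nonneg hτ fun x _ => hmu x
  have hMc := continuous_intervalIntegral_left hmu_cont t
  have hconv : ConvexOn ℝ {lam : ℝ → ℝ | Continuous lam} fun lam =>
      uGamma k (M 0) * exp (-∫ x in 0..t, lam x) +
        ∫ τ in 0..t, mu τ * (M τ ^ (k - 1) * exp (-M τ)) * exp (-∫ x in τ..t, lam x) :=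
    ((convexOn_exp_neg_intervalIntegral 0 t).smul (uGamma_nonneg k (hM 0 ht))).add
      (convexOn_intervalIntegral_mul_exp_neg (hmu_cont.mul ((hMc.pow _).mul hMc.neg.rexp)) ht
        fun τ hτ => mul_nonneg (hmu τ) (mul_nonneg (pow_nonneg (hM τ hτ.2) _) (exp_pos _).le))
  refine ((concaveOn_const 1 convex_setOf_continuous).add
    (hconv.smul (c := ((k - 1).factorial : ℝ)⁻¹) (by positivity)).neg).congr fun lam hlam => ?_
  simp only [fk, integral_mul_exp_neg_mul_uGamma k hlam hmu_cont, smul_eq_mul, Pi.add_apply,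
    Pi.neg_apply]
  field_simp
  ring

theorem concaveOn_intervalIntegral_fk_mul (k : ℕ) {mu s : ℝ → ℝ} (hmu_cont : Continuous mu)
    (hmu : ∀ x, 0 ≤ mu x) (hs : ∀ x, 0 ≤ s x) (hs_int : Integrable s) {T : ℝ}
    (hT : 0 ≤ T) :
    ConcaveOn ℝ {lam : ℝ → ℝ | Continuous lam}
      fun lam => ∫ t in 0..T, fk k lam mu t * s t :=
  concaveOn_intervalIntegral hT convex_setOf_continuous
    (fun _ hlam => hs_int.intervalIntegrable.continuousOn_mul
      (continuous_fk k hlam hmu_cont).continuousOn)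
    fun t ht => ((concaveOn_fk k hmu_cont hmu ht.1).smul (hs t)).congr fun _ _ => mul_comm _ _

theorem stmt4_general (mu : ℝ → ℝ) (hmuc : Continuous mu) (hmu : ∀ x, 0 ≤ mu x)
    (s : ℝ → ℝ) (hs0 : ∀ x, 0 ≤ s x) (hsInt : Integrable s)
    (k : ℕ) (T : ℝ) (hT : 0 < T)
    (lam1 lam2 : ℝ → ℝ) (hc1 : Continuous lam1) (hc2 : Continuous lam2)
    (α : ℝ) (hα : α ∈ Set.Ioo (0:ℝ) 1) :
    (∫ t in (0:ℝ)..T, fk k (fun x => α * lam1 x + (1 - α) * lam2 x) mu t * s t) ≥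
      α * (∫ t in (0:ℝ)..T, fk k lam1 mu t * s t) +
        (1 - α) * (∫ t in (0:ℝ)..T, fk k lam2 mu t * s t) :=
  (concaveOn_intervalIntegral_fk_mul k hmuc hmu hs0 hsInt hT.le).2 hc1 hc2 hα.1.le
    (sub_nonneg.2 hα.2.le) (add_sub_cancel α 1)

/-- the average visibility `V(k)[λ] = ∫_0^T f_k(t; λ, μ) s(t) dt` is concave
on the set of continuous nonnegative functions. -/
theorem stmt4 (mu : ℝ → ℝ) (hmuc : Continuous mu) (hmu : ∀ x, 0 ≤ mu x)
    (s : ℝ → ℝ) (hs0 : ∀ x, 0 ≤ s x) (hsInt : Integrable s)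
    (k : ℕ) (hk : 1 ≤ k) (T : ℝ) (hT : 0 < T)
    (lam1 lam2 : ℝ → ℝ) (hc1 : Continuous lam1) (hc2 : Continuous lam2)
    (h1 : ∀ x, 0 ≤ lam1 x) (h2 : ∀ x, 0 ≤ lam2 x)
    (α : ℝ) (hα : α ∈ Set.Ioo (0:ℝ) 1) :
    (∫ t in (0:ℝ)..T, fk k (fun x => α * lam1 x + (1 - α) * lam2 x) mu t * s t) ≥
      α * (∫ t in (0:ℝ)..T, fk k lam1 mu t * s t) +
        (1 - α) * (∫ t in (0:ℝ)..T, fk k lam2 mu t * s t) :=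
  stmt4_general mu hmuc hmu s hs0 hsInt k T hT lam1 lam2 hc1 hc2 α hα
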